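/- For a natural number n ≥ 2, define T_n = ∑ 1/((a − 1/2)·(b − 1/2)·sqrt(n − a − b + 1/4)), where the sum is over all pairs of integers a, b with a, b ≥ 1 and a + b ≤ n. Then T_n = O((log n)^2 / sqrt(n)) as n → ∞: there exist a constant C > 0 and N such that for all n ≥ N, T_n ≤ C·(log n)^2 / sqrt(n). -/

import Mathlib

/-!
With `x = a - 1/2`, `y = b - 1/2`, `z = c + 1/4` and `c = n - a - b` one has
`x + y + z = n - 3/4`, so one of `x, y, z` is at least `M = n/4`. Accordingly each term
`1/(x y √z)` is at most `1/(√M x y)`, `1/(M y √z)` or `1/(M x √z)`, and summing these over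
independent indices gives `T n ≤ S₁²/√M + 2 S₁ S₂/M` with
`S₁ = ∑_{a ≤ n} 1/(a - 1/2) ≤ 2 (1 + log n)` (compare with the harmonic sum) and
`S₂ = ∑_{c ≤ n} 1/√(c + 1/4) ≤ 4 √(n + 1)` (telescoping).
-/

/-- The triple sum
`T n = ∑_{a,b ≥ 1, a+b ≤ n} 1/((a − 1/2)(b − 1/2)√(n − a − b + 1/4))`. -/
noncomputable def Tsum (n : ℕ) : ℝ :=
  ∑ p ∈ (Finset.Icc 1 n ×ˢ Finset.Icc 1 n).filter (fun p : ℕ × ℕ => p.1 + p.2 ≤ n),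
    1 / (((p.1 : ℝ) - 1/2) * ((p.2 : ℝ) - 1/2) *
      Real.sqrt ((n : ℝ) - (p.1 : ℝ) - (p.2 : ℝ) + 1/4))

open Finset Real

theorem Finset.sum_mul_le_sum_mul_sum_of_injOn {ι κ μ R : Type*} [CommSemiring R]
    [PartialOrder R] [IsOrderedRing R] {s : Finset ι} {t : Finset κ} {u : Finset μ}
    (e : ι → κ × μ) (he : Set.InjOn e s) (hst : ∀ i ∈ s, e i ∈ t ×ˢ u) {f : κ → R} {g : μ → R}
    (hf : ∀ k ∈ t, 0 ≤ f k) (hg : ∀ m ∈ u, 0 ≤ g m) :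
    ∑ i ∈ s, f (e i).1 * g (e i).2 ≤ (∑ k ∈ t, f k) * ∑ m ∈ u, g m := by
  classical
  rw [← sum_image (f := fun q : κ × μ => f q.1 * g q.2) he, sum_mul_sum,
    ← sum_product (f := fun q : κ × μ => f q.1 * g q.2)]
  refine sum_le_sum_of_subset_of_nonneg (fun q hq => ?_) fun q hq _ => ?_
  · obtain ⟨i, hi, rfl⟩ := mem_image.1 hq
    exact hst i hi
  · rw [mem_product] at hq
    exact mul_nonneg (hf _ hq.1) (hg _ hq.2)

lemma inv_mul_inv_mul_inv_sqrt_le {x y z M : ℝ} (hx : 0 < x) (hy : 0 < y) (hz : 0 < z)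
    (hM : 0 < M) (hxyz : 3 * M ≤ x + y + z) :
    x⁻¹ * y⁻¹ * (√z)⁻¹ ≤
      (√M)⁻¹ * (x⁻¹ * y⁻¹) + M⁻¹ * (y⁻¹ * (√z)⁻¹) + M⁻¹ * (x⁻¹ * (√z)⁻¹) := by
  have hA : 0 ≤ (√M)⁻¹ * (x⁻¹ * y⁻¹) := by positivity
  have hB : 0 ≤ M⁻¹ * (y⁻¹ * (√z)⁻¹) := by positivity
  have hC : 0 ≤ M⁻¹ * (x⁻¹ * (√z)⁻¹) := by positivity
  obtain h | h | h : M ≤ x ∨ M ≤ y ∨ M ≤ z := by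
    by_contra! h
    linarith [h.1, h.2.1, h.2.2]
  · have := mul_le_mul_of_nonneg_right (inv_anti₀ hM h) (by positivity : 0 ≤ y⁻¹ * (√z)⁻¹)
    linarith
  · have := mul_le_mul_of_nonneg_right (inv_anti₀ hM h) (by positivity : 0 ≤ x⁻¹ * (√z)⁻¹)
    linarith
  · have := mul_le_mul_of_nonneg_right (inv_anti₀ (sqrt_pos.2 hM) (sqrt_le_sqrt h))
      (by positivity : 0 ≤ x⁻¹ * y⁻¹)
    linarith

lemma inv_sqrt_add_quarter_le {x : ℝ} (hx : 0 ≤ x) :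
    (√(x + 1/4))⁻¹ ≤ 4 * (√(x + 1) - √x) := by
  have hdouble : √(x + 1) ≤ 2 * √(x + 1/4) := by
    rw [sqrt_le_iff, mul_pow, sq_sqrt (by linarith)]
    constructor <;> [positivity; linarith]
  have hconj : (√(x + 1) - √x) * (√(x + 1) + √x) = 1 := by
    linear_combination sq_sqrt (show 0 ≤ x + 1 by linarith) - sq_sqrt hx
  have hmono : √x ≤ √(x + 1) := sqrt_le_sqrt (by linarith)
  rw [inv_le_iff_one_le_mul₀ (sqrt_pos.2 (by linarith))]
  nlinarith [sqrt_nonneg x]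

def triangle (n : ℕ) : Finset (ℕ × ℕ) :=
  (Icc 1 n ×ˢ Icc 1 n).filter fun p => p.1 + p.2 ≤ n

noncomputable def invSubHalf (a : ℕ) : ℝ := ((a : ℝ) - 1/2)⁻¹

noncomputable def invSqrtAddQuarter (c : ℕ) : ℝ := (√((c : ℝ) + 1/4))⁻¹

lemma invSubHalf_pos {a : ℕ} (ha : 1 ≤ a) : 0 < invSubHalf a := by
  have : (1 : ℝ) ≤ a := by exact_mod_cast ha
  rw [invSubHalf, inv_pos]
  linarith

lemma invSubHalf_le {a : ℕ} (ha : 1 ≤ a) : invSubHalf a ≤ 2 * (a : ℝ)⁻¹ := by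
  have : (1 : ℝ) ≤ a := by exact_mod_cast ha
  rw [invSubHalf, ← div_eq_mul_inv, inv_eq_one_div, div_le_div_iff₀ (by linarith) (by linarith)]
  linarith

lemma sum_invSubHalf_le (n : ℕ) : ∑ a ∈ Icc 1 n, invSubHalf a ≤ 2 * (1 + log n) := by
  calc ∑ a ∈ Icc 1 n, invSubHalf a ≤ ∑ a ∈ Icc 1 n, 2 * (a : ℝ)⁻¹ :=
        sum_le_sum fun a ha => invSubHalf_le (mem_Icc.1 ha).1
    _ = 2 * (harmonic n : ℝ) := by simp [harmonic_eq_sum_Icc, mul_sum]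
    _ ≤ 2 * (1 + log n) := by gcongr; exact harmonic_le_one_add_log n

lemma invSqrtAddQuarter_nonneg (c : ℕ) : 0 ≤ invSqrtAddQuarter c := by
  unfold invSqrtAddQuarter; positivity

lemma sum_invSqrtAddQuarter_le (n : ℕ) :
    ∑ c ∈ range (n + 1), invSqrtAddQuarter c ≤ 4 * √((n : ℝ) + 1) := by
  calc ∑ c ∈ range (n + 1), invSqrtAddQuarter c
      ≤ ∑ c ∈ range (n + 1), (4 * √((c + 1 : ℕ) : ℝ) - 4 * √(c : ℝ)) :=
        sum_le_sum fun c _ => by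
          rw [invSqrtAddQuarter]
          push_cast
          linarith [inv_sqrt_add_quarter_le (Nat.cast_nonneg (α := ℝ) c)]
    _ = 4 * √((n : ℝ) + 1) := by
        rw [sum_range_sub (fun c => 4 * √(c : ℝ))]
        push_cast
        simp

lemma Tsum_eq (n : ℕ) : Tsum n = ∑ p ∈ triangle n,
    invSubHalf p.1 * invSubHalf p.2 * invSqrtAddQuarter (n - p.1 - p.2) := by
  refine sum_congr rfl fun p hp => ?_
  have hle : p.1 + p.2 ≤ n := (mem_filter.1 hp).2
  rw [invSubHalf, invSubHalf, invSqrtAddQuarter, Nat.sub_sub, Nat.cast_sub hle, one_div,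
    mul_inv, mul_inv]
  push_cast
  ring_nf

lemma mem_triangle {n : ℕ} {p : ℕ × ℕ} :
    p ∈ triangle n ↔ 1 ≤ p.1 ∧ 1 ≤ p.2 ∧ p.1 + p.2 ≤ n := by
  simp only [triangle, mem_filter, mem_product, mem_Icc]
  omega

lemma sum_triangle_invSubHalf_mul_invSubHalf_le (n : ℕ) :
    ∑ p ∈ triangle n, invSubHalf p.1 * invSubHalf p.2 ≤ (∑ a ∈ Icc 1 n, invSubHalf a) ^ 2 := by
  rw [sq]
  exact sum_mul_le_sum_mul_sum_of_injOn (f := invSubHalf) (g := invSubHalf) id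
    (Set.injOn_id _) (fun p hp => (mem_filter.1 hp).1)
    (fun a ha => (invSubHalf_pos (mem_Icc.1 ha).1).le)
    (fun a ha => (invSubHalf_pos (mem_Icc.1 ha).1).le)

lemma sum_triangle_invSubHalf_mul_invSqrtAddQuarter_le (n : ℕ) :
    ∑ p ∈ triangle n, invSubHalf p.1 * invSqrtAddQuarter (n - p.1 - p.2) ≤
      (∑ a ∈ Icc 1 n, invSubHalf a) * ∑ c ∈ range (n + 1), invSqrtAddQuarter c := by
  have hinj : Set.InjOn (fun p : ℕ × ℕ => (p.1, n - p.1 - p.2)) (triangle n) := by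
    intro p hp q hq hpq
    simp only [Prod.mk.injEq] at hpq
    have := mem_triangle.1 hp
    have := mem_triangle.1 hq
    ext <;> omega
  have hmaps : ∀ p ∈ triangle n, (p.1, n - p.1 - p.2) ∈ Icc 1 n ×ˢ range (n + 1) := by
    intro p hp
    have := mem_triangle.1 hp
    simp only [mem_product, mem_Icc, mem_range]
    omega
  exact sum_mul_le_sum_mul_sum_of_injOn (f := invSubHalf) (g := invSqrtAddQuarter) _ hinj hmaps
    (fun a ha => (invSubHalf_pos (mem_Icc.1 ha).1).le) (fun c _ => invSqrtAddQuarter_nonneg c)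

lemma sum_triangle_swap (n : ℕ) (f : ℕ × ℕ → ℝ) :
    ∑ p ∈ triangle n, f p.swap = ∑ p ∈ triangle n, f p :=
  sum_equiv (Equiv.prodComm ℕ ℕ) (fun p => by
    simp only [mem_triangle, Equiv.prodComm_apply, Prod.fst_swap, Prod.snd_swap]; omega)
    fun _ _ => rfl

lemma Tsum_le {n : ℕ} {M : ℝ} (hM : 0 < M) (hn : 3 * M ≤ n - 3/4) :
    Tsum n ≤ (√M)⁻¹ * (∑ a ∈ Icc 1 n, invSubHalf a) ^ 2 +
      2 * M⁻¹ * ((∑ a ∈ Icc 1 n, invSubHalf a) * ∑ c ∈ range (n + 1), invSqrtAddQuarter c) := by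
  have hswap : ∑ p ∈ triangle n, invSubHalf p.2 * invSqrtAddQuarter (n - p.1 - p.2) =
      ∑ p ∈ triangle n, invSubHalf p.1 * invSqrtAddQuarter (n - p.1 - p.2) := by
    rw [← sum_triangle_swap]
    simp only [Prod.fst_swap, Prod.snd_swap, Nat.sub_right_comm]
  rw [Tsum_eq]
  calc _ ≤ ∑ p ∈ triangle n, ((√M)⁻¹ * (invSubHalf p.1 * invSubHalf p.2) +
        M⁻¹ * (invSubHalf p.2 * invSqrtAddQuarter (n - p.1 - p.2)) +
        M⁻¹ * (invSubHalf p.1 * invSqrtAddQuarter (n - p.1 - p.2))) := by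
        refine sum_le_sum fun p hp => ?_
        obtain ⟨h1, h2, h12⟩ := mem_triangle.1 hp
        have h1' : (1 : ℝ) ≤ p.1 := by exact_mod_cast h1
        have h2' : (1 : ℝ) ≤ p.2 := by exact_mod_cast h2
        have hc : ((n - p.1 - p.2 : ℕ) : ℝ) = n - p.1 - p.2 := by
          rw [Nat.sub_sub, Nat.cast_sub h12]; push_cast; ring
        simp only [invSubHalf, invSqrtAddQuarter, hc]
        exact inv_mul_inv_mul_inv_sqrt_le (by linarith) (by linarith) (by linarith) hM
          (by linarith)
    _ = (√M)⁻¹ * ∑ p ∈ triangle n, invSubHalf p.1 * invSubHalf p.2 +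
        2 * M⁻¹ * ∑ p ∈ triangle n, invSubHalf p.1 * invSqrtAddQuarter (n - p.1 - p.2) := by
        simp only [sum_add_distrib, ← mul_sum, hswap]
        ring
    _ ≤ _ := by
        gcongr
        · exact sum_triangle_invSubHalf_mul_invSubHalf_le n
        · exact sum_triangle_invSubHalf_mul_invSqrtAddQuarter_le n

/-- `T n = O((log n)² / √n)` as `n → ∞`: there are a constant `C > 0` and a
threshold `N` such that `T n ≤ C (log n)² / √n` for all `n ≥ N`. -/
theorem stmt19 :
    ∃ C : ℝ, 0 < C ∧ ∃ N : ℕ, ∀ n : ℕ, N ≤ n →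
      Tsum n ≤ C * (Real.log (n : ℝ)) ^ 2 / Real.sqrt (n : ℝ) := by
  refine ⟨288, by norm_num, 3, fun n hn => ?_⟩
  have hn3 : (3 : ℝ) ≤ n := by exact_mod_cast hn
  set s := √(n : ℝ)
  have hs : 0 < s := sqrt_pos.2 (by linarith)
  have hsq : s ^ 2 = n := sq_sqrt (by linarith)
  have hL : 1 ≤ log n := by
    rw [le_log_iff_exp_le (by linarith)]
    linarith [exp_one_lt_d9]
  have hT := Tsum_le (n := n) (M := (s / 2) ^ 2) (by positivity) (by rw [div_pow, hsq]; linarith)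
  rw [sqrt_sq (by positivity)] at hT
  set A := ∑ a ∈ Icc 1 n, invSubHalf a
  set B := ∑ c ∈ range (n + 1), invSqrtAddQuarter c
  have hA0 : 0 ≤ A := sum_nonneg fun a ha => (invSubHalf_pos (mem_Icc.1 ha).1).le
  have hA : A ≤ 4 * log n := by linarith [sum_invSubHalf_le n]
  have hB : B ≤ 8 * s := by
    have : √((n : ℝ) + 1) ≤ 2 * s := by
      rw [sqrt_le_iff, mul_pow, hsq]
      constructor <;> [positivity; linarith]
    linarith [sum_invSqrtAddQuarter_le n]
  calc Tsum n ≤ (2 * A ^ 2 + 8 * A * (B / s)) / s := by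
        convert hT using 1; field_simp; ring
    _ ≤ 288 * log n ^ 2 / s := by
        gcongr
        have : B / s ≤ 8 := by rw [div_le_iff₀ hs]; linarith
        nlinarith
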